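/- arXiv:2502.19287 — 2 statements merged into one kernel-verified Lean document; each statement's English description precedes it below -/
import Mathlib

section
/- Let X be a nominal set (a Perm(𝔸)-set with finitely supported elements over a countably infinite set 𝔸 of atoms) and x ∈ X. If π is a finite permutation of 𝔸 written as a product of disjoint cycles with π·x = x, and η is one of the cycles of π such that the domain of η contains some atom not in supp(x), then the domain of η is disjoint from supp(x). -/
/-- The countably infinite set of atoms. -/
abbrev Atom : Type := ℕ

/-- The domain of a permutation: the atoms it moves. -/
def pdom (π : Equiv.Perm Atom) : Set Atom := {a | π a ≠ a}

/-- The group `Perm(𝔸)` of finite (finitely supported) permutations of atoms. -/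
def FinPerm : Subgroup (Equiv.Perm Atom) where
  carrier := {π | (pdom π).Finite}
  one_mem' := by simp [pdom]
  mul_mem' := by
    intro π σ hπ hσ
    refine (Set.Finite.union hπ hσ).subset ?_
    intro a ha
    by_contra h
    simp only [Set.mem_union, pdom, Set.mem_setOf_eq, not_or, not_not] at h
    exact ha (by simp [pdom, Equiv.Perm.mul_apply, h.1, h.2])
  inv_mem' := by
    intro π hπ
    refine hπ.subset ?_
    intro a ha h
    apply ha
    calc π⁻¹ a = π⁻¹ (π a) := by rw [h]
    _ = a := by simp

/-- `B` supports `x` w.r.t. the action `act`: every finite permutation fixing `B`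
pointwise fixes `x`. -/
def NSupports {X : Type*} (act : FinPerm → X → X) (B : Set Atom) (x : X) : Prop :=
  ∀ π : FinPerm, (∀ a ∈ B, (π : Equiv.Perm Atom) a = a) → act π x = x

/-- `nsupp act x` is the least support of `x`: the intersection of all finite supports. -/
def nsupp {X : Type*} (act : FinPerm → X → X) (x : X) : Set Atom :=
  ⋂₀ {B : Set Atom | B.Finite ∧ NSupports act B x}

/-- `act` makes `X` into a nominal set: a lawful `FinPerm`-action all of whose
elements are finitely supported. -/
def IsNominal {X : Type*} (act : FinPerm → X → X) : Prop :=
  (∀ x, act 1 x = x) ∧ (∀ π σ x, act (π * σ) x = act π (act σ x)) ∧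
  (∀ x, ∃ B : Set Atom, B.Finite ∧ NSupports act B x)

/-- The transposition `(a b)` as a finite permutation. -/
def swapF (a b : Atom) : FinPerm :=
  ⟨Equiv.swap a b, by
    apply Set.Finite.subset ((Set.finite_singleton b).insert a)
    intro x hx
    by_contra h
    simp only [Set.mem_insert_iff, Set.mem_singleton_iff, not_or] at h
    exact hx (Equiv.swap_apply_of_ne_of_ne h.1 h.2)⟩


/-!
Since `π • x = x` and supports are equivariant, `π` maps `supp x` onto itself, so every
`π`-orbit lies either inside or outside `supp x`. The cycle `η` is disjoint from the other
cycles, so `π` acts like `η` on `dom η`, which is a single `η`-orbit and hence lies inside one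
`π`-orbit. It contains an atom outside `supp x`, so it misses `supp x` altogether.
-/

namespace Equiv.Perm

variable {α : Type*} {f g : Perm α} {x y : α}

theorem SameCycle.imp_of_forall_apply_iff {p : α → Prop} (hf : ∀ z, p (f z) ↔ p z)
    (h : f.SameCycle x y) (hx : p x) : p y := by
  obtain ⟨n, rfl⟩ := h
  -- `f` restricts to a permutation of `{z // p z}`, whose powers stay in the subtype.
  simpa using ((f.subtypePerm hf ^ n) ⟨x, hx⟩).2

theorem Disjoint.sameCycle_mul_of_sameCycle_left (h : f.Disjoint g) (hxy : f.SameCycle x y) :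
    (f * g).SameCycle x y := by
  rcases h x with hfx | hgx
  · rw [← hxy.eq_of_left hfx]
  · obtain ⟨n, rfl⟩ := hxy
    exact ⟨n, by simp [h.commute.mul_zpow, zpow_apply_eq_self_of_apply_eq_self hgx]⟩

theorem exists_disjoint_prod_eq_mul_of_mem {l : List (Perm α)} (hl : l.Pairwise Disjoint)
    (hf : f ∈ l) : ∃ g, f.Disjoint g ∧ l.prod = f * g := by
  induction l with
  | nil => simp at hf
  | cons h t ih =>
    rw [List.pairwise_cons] at hl
    rcases List.mem_cons.mp hf with rfl | hft
    · exact ⟨t.prod, disjoint_prod_right t hl.1, List.prod_cons⟩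
    · obtain ⟨g, hfg, hprod⟩ := ih hl.2 hft
      have hhf : h.Disjoint f := hl.1 f hft
      refine ⟨h * g, hhf.symm.mul_right hfg, ?_⟩
      rw [List.prod_cons, hprod, ← mul_assoc, hhf.commute.eq, mul_assoc]

theorem sameCycle_prod_of_mem {l : List (Perm α)} (hl : l.Pairwise Disjoint) (hf : f ∈ l)
    (hxy : f.SameCycle x y) : l.prod.SameCycle x y := by
  obtain ⟨g, hfg, hprod⟩ := exists_disjoint_prod_eq_mul_of_mem hl hf
  rw [hprod]
  exact hfg.sameCycle_mul_of_sameCycle_left hxy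

end Equiv.Perm

section Nominal

variable {X : Type*} {act : FinPerm → X → X}

theorem IsNominal.act_inv_act (hnom : IsNominal act) (σ : FinPerm) (x : X) :
    act σ⁻¹ (act σ x) = x := by
  rw [← hnom.2.1, inv_mul_cancel, hnom.1]

theorem NSupports.image (hnom : IsNominal act) (σ : FinPerm) {B : Set Atom} {x : X}
    (hB : NSupports act B x) : NSupports act ((σ : Equiv.Perm Atom) '' B) (act σ x) := by
  intro τ hτ
  have hconj : act (σ⁻¹ * τ * σ) x = x := by
    apply hB
    intro a ha
    simp [Equiv.Perm.mul_apply, hτ _ ⟨a, ha, rfl⟩]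
  calc act τ (act σ x) = act (σ * (σ⁻¹ * τ * σ)) x := by rw [← hnom.2.1]; group
    _ = act σ x := by rw [hnom.2.1, hconj]

theorem image_nsupp_subset (hnom : IsNominal act) (σ : FinPerm) (x : X) :
    (σ : Equiv.Perm Atom) '' nsupp act x ⊆ nsupp act (act σ x) := by
  rintro _ ⟨a, ha, rfl⟩
  simp only [nsupp, Set.mem_sInter, Set.mem_ofPred_eq]
  rintro C ⟨hC, hCx⟩
  have hσC : ((σ⁻¹ : FinPerm) : Equiv.Perm Atom) '' C ∈ {B | B.Finite ∧ NSupports act B x} :=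
    ⟨hC.image _, hnom.act_inv_act σ x ▸ hCx.image hnom σ⁻¹⟩
  obtain ⟨c, hc, rfl⟩ := Set.mem_sInter.mp ha _ hσC
  simpa using hc

theorem apply_mem_nsupp_iff_of_act_eq (hnom : IsNominal act) {π : FinPerm} {x : X}
    (hfix : act π x = x) (a : Atom) :
    (π : Equiv.Perm Atom) a ∈ nsupp act x ↔ a ∈ nsupp act x := by
  constructor
  · intro h
    have hinv : act π⁻¹ x = x := by
      conv_lhs => rw [← hfix]
      exact hnom.act_inv_act π x
    simpa [hinv] using image_nsupp_subset hnom π⁻¹ x ⟨_, h, rfl⟩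
  · intro h
    simpa [hfix] using image_nsupp_subset hnom π x ⟨a, h, rfl⟩

end Nominal

/-- if `π • x = x`, `π` is a product of pairwise disjoint cycles, and
`η` is one of those cycles whose domain contains an atom outside `supp x`, then the
domain of `η` is disjoint from `supp x`. -/
theorem stmt0 {X : Type*} (act : FinPerm → X → X) (hnom : IsNominal act)
    (x : X) (π : FinPerm) (l : List (Equiv.Perm Atom))
    (hdisj : l.Pairwise Equiv.Perm.Disjoint)
    (hcycles : ∀ η ∈ l, η.IsCycle)
    (hprod : (π : Equiv.Perm Atom) = l.prod)
    (hfix : act π x = x)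
    (η : Equiv.Perm Atom) (hη : η ∈ l)
    (hex : ∃ a ∈ pdom η, a ∉ nsupp act x) :
    pdom η ∩ nsupp act x = ∅ := by
  obtain ⟨a, ha, ha_supp⟩ := hex
  refine Set.eq_empty_iff_forall_notMem.mpr fun b ⟨hb, hb_supp⟩ => ha_supp ?_
  have hπab : (π : Equiv.Perm Atom).SameCycle b a := by
    rw [hprod]
    exact Equiv.Perm.sameCycle_prod_of_mem hdisj hη ((hcycles η hη).sameCycle hb ha)
  exact hπab.imp_of_forall_apply_iff (apply_mem_nsupp_iff_of_act_eq hnom hfix) hb_supp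
end

section
/- Let X be a nominal set and ~ an equivariant equivalence relation on X (i.e., x ~ y implies π·x ~ π·y for all finite permutations π). Then the quotient X/~ with the induced action is a nominal set, and for each equivalence class C, supp(C) = ⋂{supp(g) : g ∈ C}. -/
/-!
Any finite support of a member `g` of a class `C` also supports `C`, so `supp C ⊆ supp g`.
Conversely, if `a ∉ supp C`, take `b` fresh for `C` and for some `g ∈ C`: the transposition
`(a b)` fixes `C`, so `(a b)·g ∈ C`, and its support `(a b)·supp g` avoids `a`.

That `supp x` is itself a finite support comes down to the intersection of two finite supports
`A`, `B` being a support. It suffices to check this on transpositions, since they generate the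
finite permutations fixing a set pointwise; and for `a ∉ A`, `b ∉ B` and `c` fresh,
`(a b) = (c a) (b c) (c a)` is a product of transpositions fixing `A` or `B`.
-/

open Set

lemma swapF_comm (a b : Atom) : swapF a b = swapF b a :=
  Subtype.ext (Equiv.swap_comm a b)

lemma NSupports.act_swapF_eq {X : Type*} {act : FinPerm → X → X} {A : Set Atom} {x : X}
    (h : NSupports act A x) {a b : Atom} (ha : a ∉ A) (hb : b ∉ A) :
    act (swapF a b) x = x :=
  h _ fun _ hc => Equiv.swap_apply_of_ne_of_ne (ne_of_mem_of_not_mem hc ha)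
    (ne_of_mem_of_not_mem hc hb)

namespace IsNominal

variable {X : Type*} {act : FinPerm → X → X}

def stabilizer (hnom : IsNominal act) (x : X) : Subgroup FinPerm where
  carrier := {π | act π x = x}
  one_mem' := hnom.1 x
  mul_mem' {π σ} hπ hσ := by
    change act (π * σ) x = x
    rw [hnom.2.1, hσ, hπ]
  inv_mem' {π} hπ := by
    change act π⁻¹ x = x
    conv_lhs => rw [← hπ, ← hnom.2.1, inv_mul_cancel, hnom.1]

lemma nsupports_image (hnom : IsNominal act) {A : Set Atom} {x : X} (h : NSupports act A x)
    (π : FinPerm) :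
    NSupports act ((π : Equiv.Perm Atom) '' A) (act π x) := by
  intro σ hσ
  have hconj : act (π⁻¹ * σ * π) x = x := h _ fun a ha => by
    change (π : Equiv.Perm Atom)⁻¹ ((σ : Equiv.Perm Atom) ((π : Equiv.Perm Atom) a)) = a
    rw [hσ _ (mem_image_of_mem _ ha)]
    exact (π : Equiv.Perm Atom).symm_apply_apply a
  calc act σ (act π x) = act π (act (π⁻¹ * σ * π) x) := by
        rw [← hnom.2.1, ← hnom.2.1]
        group
    _ = act π x := by rw [hconj]

lemma nsupports_of_act_swapF_eq (hnom : IsNominal act) {A : Set Atom} {x : X}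
    (hswap : ∀ a ∉ A, ∀ b ∉ A, act (swapF a b) x = x) : NSupports act A x := by
  intro π hπA
  let S : Set (Equiv.Perm Atom) := {σ | ∃ a ∉ A, ∃ b ∉ A, a ≠ b ∧ σ = Equiv.swap a b}
  have hS : ∀ σ ∈ S, σ.IsSwap := fun σ ⟨a, _, b, _, hab, hσ⟩ => ⟨a, b, hab, hσ⟩
  have hle : Subgroup.closure S ≤ (hnom.stabilizer x).map FinPerm.subtype := by
    rw [Subgroup.closure_le]
    rintro _ ⟨a, ha, b, hb, -, rfl⟩
    exact ⟨swapF a b, hswap a ha b hb, rfl⟩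
  have hπS : (π : Equiv.Perm Atom) ∈ Subgroup.closure S := by
    refine (mem_closure_isSwap hS).2 ⟨π.2, fun c => ?_⟩
    by_cases hc : (π : Equiv.Perm Atom) c = c
    · rw [hc]
      exact MulAction.mem_orbit_self c
    · have hcA : c ∉ A := fun h => hc (hπA c h)
      have hπcA : (π : Equiv.Perm Atom) c ∉ A := fun h =>
        hc ((π : Equiv.Perm Atom).injective (hπA _ h))
      exact ⟨⟨_, Subgroup.subset_closure ⟨c, hcA, _, hπcA, Ne.symm hc, rfl⟩⟩,
        Equiv.swap_apply_left c _⟩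
  obtain ⟨σ, hσ, hσπ⟩ := hle hπS
  rwa [← Subtype.ext hσπ]

lemma nsupports_inter (hnom : IsNominal act) {A B : Set Atom} {x : X} (hA : A.Finite)
    (hB : B.Finite) (hAx : NSupports act A x) (hBx : NSupports act B x) :
    NSupports act (A ∩ B) x := by
  have hmixed : ∀ a ∉ A, ∀ b ∉ B, act (swapF a b) x = x := by
    intro a ha b hb
    by_cases hbA : b ∈ A
    · obtain ⟨c, hc⟩ := ((hA.union hB).insert a |>.insert b).exists_notMem
      simp only [mem_insert_iff, mem_union, not_or] at hc
      obtain ⟨hcb, -, hcA, hcB⟩ := hc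
      have hconj : swapF a b = swapF c a * swapF b c * swapF c a :=
        Subtype.ext
          (Equiv.swap_mul_swap_mul_swap (Ne.symm hcb) (ne_of_mem_of_not_mem hbA ha)).symm
      rw [hconj, hnom.2.1, hnom.2.1, hAx.act_swapF_eq hcA ha, hBx.act_swapF_eq hb hcB,
        hAx.act_swapF_eq hcA ha]
    · exact hAx.act_swapF_eq ha hbA
  refine hnom.nsupports_of_act_swapF_eq fun a ha b hb => ?_
  rw [mem_inter_iff, not_and_or] at ha hb
  rcases ha with ha | ha <;> rcases hb with hb | hb
  · exact hAx.act_swapF_eq ha hb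
  · exact hmixed a ha b hb
  · rw [swapF_comm]
    exact hmixed b hb a ha
  · exact hBx.act_swapF_eq ha hb

lemma isLeast_nsupp (hnom : IsNominal act) (x : X) :
    IsLeast {B : Set Atom | B.Finite ∧ NSupports act B x} (nsupp act x) := by
  obtain ⟨B, hB, hBx⟩ := hnom.2.2 x
  have hfin : {C : Set Atom | C ⊆ B ∧ NSupports act C x}.Finite :=
    hB.finite_subsets.subset fun _ hC => hC.1
  obtain ⟨M, ⟨hMB, hMx⟩, hmin⟩ := hfin.exists_minimal ⟨B, subset_rfl, hBx⟩
  have hM : IsLeast {B : Set Atom | B.Finite ∧ NSupports act B x} M := by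
    refine ⟨⟨hB.subset hMB, hMx⟩, fun C ⟨hC, hCx⟩ => ?_⟩
    have hMC := hmin ⟨inter_subset_left.trans hMB,
      hnom.nsupports_inter (hB.subset hMB) hC hMx hCx⟩ inter_subset_left
    exact hMC.trans inter_subset_right
  rwa [nsupp, ← sInf_eq_sInter, hM.csInf_eq]

lemma nsupp_finite (hnom : IsNominal act) (x : X) : (nsupp act x).Finite :=
  (hnom.isLeast_nsupp x).1.1

lemma nsupports_nsupp (hnom : IsNominal act) (x : X) : NSupports act (nsupp act x) x :=
  (hnom.isLeast_nsupp x).1.2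

lemma nsupp_subset (hnom : IsNominal act) {B : Set Atom} {x : X} (hB : B.Finite)
    (hBx : NSupports act B x) : nsupp act x ⊆ B :=
  (hnom.isLeast_nsupp x).2 ⟨hB, hBx⟩

end IsNominal

section Quotient

variable {X : Type*} {act : FinPerm → X → X} (r : Setoid X)
  (hequi : ∀ (π : FinPerm) (x y : X), r.r x y → r.r (act π x) (act π y))

def quotientAct : FinPerm → Quotient r → Quotient r :=
  fun π => Quotient.map (act π) (hequi π)

lemma NSupports.quotient_mk {B : Set Atom} {x : X} (h : NSupports act B x) :
    NSupports (quotientAct r hequi) B (Quotient.mk r x) :=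
  fun π hπ => congrArg (Quotient.mk r) (h π hπ)

lemma IsNominal.quotient (hnom : IsNominal act) : IsNominal (quotientAct r hequi) := by
  refine ⟨?_, ?_, ?_⟩
  · rintro ⟨x⟩
    exact congrArg (Quotient.mk r) (hnom.1 x)
  · rintro π σ ⟨x⟩
    exact congrArg (Quotient.mk r) (hnom.2.1 π σ x)
  · rintro ⟨x⟩
    obtain ⟨B, hB, hBx⟩ := hnom.2.2 x
    exact ⟨B, hB, hBx.quotient_mk r hequi⟩

lemma IsNominal.nsupp_quotient_mk_subset (hnom : IsNominal act) (x : X) :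
    nsupp (quotientAct r hequi) (Quotient.mk r x) ⊆ nsupp act x :=
  (hnom.quotient r hequi).nsupp_subset (hnom.nsupp_finite x)
    ((hnom.nsupports_nsupp x).quotient_mk r hequi)

lemma IsNominal.exists_mk_eq_notMem_nsupp (hnom : IsNominal act) {x : X} {a : Atom}
    (ha : a ∉ nsupp (quotientAct r hequi) (Quotient.mk r x)) :
    ∃ y, Quotient.mk r y = Quotient.mk r x ∧ a ∉ nsupp act y := by
  have hqnom := hnom.quotient r hequi
  obtain ⟨b, hb⟩ :=
    ((hnom.nsupp_finite x).union (hqnom.nsupp_finite (Quotient.mk r x))).exists_notMem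
  rw [mem_union, not_or] at hb
  refine ⟨act (swapF a b) x, (hqnom.nsupports_nsupp _).act_swapF_eq ha hb.2, fun hay => ?_⟩
  obtain ⟨c, hc, hca⟩ := hnom.nsupp_subset ((hnom.nsupp_finite x).image _)
    (hnom.nsupports_image (hnom.nsupports_nsupp x) (swapF a b)) hay
  change Equiv.swap a b c = a at hca
  rw [Equiv.swap_apply_eq_iff, Equiv.swap_apply_left] at hca
  exact hb.1 (hca ▸ hc)

lemma IsNominal.nsupp_quotient (hnom : IsNominal act) (C : Quotient r) :
    nsupp (quotientAct r hequi) C = ⋂ g ∈ {g : X | Quotient.mk r g = C}, nsupp act g := by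
  obtain ⟨x, rfl⟩ := Quotient.mk_surjective C
  refine Subset.antisymm (subset_iInter₂ fun y hy => ?_) fun a ha => by_contra fun haC => ?_
  · rw [← hy]
    exact hnom.nsupp_quotient_mk_subset r hequi y
  · obtain ⟨y, hy, hay⟩ := hnom.exists_mk_eq_notMem_nsupp r hequi haC
    exact hay (mem_iInter₂.1 ha y hy)

end Quotient

/-- the quotient of a nominal set by an equivariant equivalence
relation, with the induced action `π·[x] = [π·x]`, is a nominal set, and the
support of a class `C` is the intersection of the supports of its members. -/
theorem stmt11 {X : Type*} (act : FinPerm → X → X) (hnom : IsNominal act)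
    (r : Setoid X)
    (hequi : ∀ (π : FinPerm) (x y : X), r.r x y → r.r (act π x) (act π y)) :
    ∃ qact : FinPerm → Quotient r → Quotient r,
      (∀ (π : FinPerm) (x : X), qact π (Quotient.mk r x) = Quotient.mk r (act π x)) ∧
      IsNominal qact ∧
      ∀ C : Quotient r,
        nsupp qact C = ⋂ g ∈ {g : X | Quotient.mk r g = C}, nsupp act g :=
  ⟨quotientAct r hequi, fun _ _ => rfl, hnom.quotient r hequi, hnom.nsupp_quotient r hequi⟩
end
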